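/- Let 0 < α < 1, p ∈ (1,∞), T > 0, and let F ∈ C¹([0,T]). Then for every t ∈ (0,T], the Caputo fractional derivatives satisfy ∂_t^α(|F|^p)(t) ≤ p|F(t)|^{p−2}F(t) · ∂_t^α F(t), where |F(t)|^{p−2}F(t) is interpreted as 0 when F(t)=0. -/

import Mathlib

/-! Write `φ x = |x| ^ p`, a convex `C¹` function with `φ' x = p |x|^{p-2} x`, and let
`c = φ'(F t)` and `g = c F - φ ∘ F`. Since `φ` lies above its tangent line at `F t`, `g` attains its
maximum over `[0, t]` at `t`, and by linearity the claim is `∂_t^α g(t) ≥ 0`. This holds for every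
`C¹` function `g` maximal at `t`: integrating by parts on `[0, t - ε]` against the kernel
`(t - s)^{-α}`, which increases in `s`, bounds the truncated integral below by
`ε^{-α} (g(t - ε) - g(t)) = O(ε^{1-α})`, and this tends to `0` as `ε → 0⁺` because `α < 1`. -/

open MeasureTheory

/-- The Caputo fractional derivative `∂_t^α f(t) = ∫₀ᵗ (t−s)^{−α}/Γ(1−α) · f'(s) ds`. -/
noncomputable def caputo (α : ℝ) (f : ℝ → ℝ) (t : ℝ) : ℝ :=
  ∫ s in (0:ℝ)..t, ((t - s) ^ (-α) / Real.Gamma (1 - α)) * deriv f s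

open Set Filter Topology

lemma ConvexOn.apply_add_mul_sub_le_of_hasDerivAt {S : Set ℝ} {f : ℝ → ℝ} {f' x y : ℝ}
    (hfc : ConvexOn ℝ S f) (hx : x ∈ S) (hy : y ∈ S) (hf : HasDerivAt f f' x) :
    f x + f' * (y - x) ≤ f y := by
  rcases lt_trichotomy x y with hxy | rfl | hxy
  · have hslope := hfc.le_slope_of_hasDerivAt hx hy hxy hf
    rw [slope_def_field, le_div_iff₀ (sub_pos.2 hxy)] at hslope
    linarith
  · simp
  · have hslope := hfc.slope_le_of_hasDerivAt hy hx hxy hf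
    rw [slope_def_field, div_le_iff₀ (sub_pos.2 hxy)] at hslope
    linarith

lemma convexOn_abs_rpow {p : ℝ} (hp : 1 ≤ p) : ConvexOn ℝ univ (fun x : ℝ => |x| ^ p) := by
  have himage : (fun x : ℝ => |x|) '' univ = Ici 0 := by
    ext x
    exact ⟨fun ⟨y, _, hy⟩ => hy ▸ abs_nonneg y, fun hx => ⟨x, mem_univ x, abs_of_nonneg hx⟩⟩
  refine ConvexOn.comp (himage ▸ convexOn_rpow hp) (convexOn_norm convex_univ) ?_
  exact himage ▸ fun x hx y _ hxy => Real.rpow_le_rpow hx hxy (by linarith)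

section Caputo

variable {α t : ℝ}

lemma intervalIntegrable_sub_rpow_neg_mul (hα1 : α < 1) (ht : 0 ≤ t) {f : ℝ → ℝ}
    (hf : ContinuousOn f (Icc 0 t)) :
    IntervalIntegrable (fun s => (t - s) ^ (-α) * f s) volume 0 t := by
  have hkernel : IntervalIntegrable (fun s => (t - s) ^ (-α)) volume 0 t := by
    simpa using (intervalIntegral.intervalIntegrable_rpow' (a := t) (b := 0) (r := -α)
      (by linarith)).comp_sub_left t
  exact hkernel.mul_continuousOn (by rwa [uIcc_of_le ht])

lemma caputo_eq_inv_mul_integral (f : ℝ → ℝ) :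
    caputo α f t = (Real.Gamma (1 - α))⁻¹ * ∫ s in (0:ℝ)..t, (t - s) ^ (-α) * deriv f s := by
  rw [caputo, ← intervalIntegral.integral_const_mul]
  congr 1 with s
  ring

lemma caputo_const_mul (c : ℝ) (f : ℝ → ℝ) : caputo α (fun s => c * f s) t = c * caputo α f t := by
  rw [caputo, caputo, deriv_const_mul_field', ← intervalIntegral.integral_const_mul]
  congr 1 with s
  ring

lemma caputo_sub (hα1 : α < 1) (ht : 0 ≤ t) {f g : ℝ → ℝ}
    (hf : ∀ s ∈ Icc 0 t, DifferentiableAt ℝ f s) (hf' : ContinuousOn (deriv f) (Icc 0 t))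
    (hg : ∀ s ∈ Icc 0 t, DifferentiableAt ℝ g s) (hg' : ContinuousOn (deriv g) (Icc 0 t)) :
    caputo α (f - g) t = caputo α f t - caputo α g t := by
  rw [caputo_eq_inv_mul_integral, caputo_eq_inv_mul_integral, caputo_eq_inv_mul_integral,
    ← mul_sub, ← intervalIntegral.integral_sub (intervalIntegrable_sub_rpow_neg_mul hα1 ht hf')
      (intervalIntegrable_sub_rpow_neg_mul hα1 ht hg')]
  congr 1
  refine intervalIntegral.integral_congr fun s hs => ?_
  rw [uIcc_of_le ht] at hs
  simp only [deriv_sub (hf s hs) (hg s hs), mul_sub]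

lemma rpow_neg_mul_sub_le_integral_of_isMaxOn (hα0 : 0 ≤ α) {g : ℝ → ℝ}
    (hg : ∀ s ∈ Icc 0 t, DifferentiableAt ℝ g s) (hg' : ContinuousOn (deriv g) (Icc 0 t))
    (hmax : IsMaxOn g (Icc 0 t) t) {ε : ℝ} (hε : ε ∈ Ioc 0 t) :
    ε ^ (-α) * (g (t - ε) - g t) ≤ ∫ s in (0:ℝ)..(t - ε), (t - s) ^ (-α) * deriv g s := by
  obtain ⟨hε0, hεt⟩ := hε
  have hsub : Icc 0 (t - ε) ⊆ Icc 0 t := Icc_subset_Icc_right (by linarith)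
  have huIcc : uIcc 0 (t - ε) = Icc 0 (t - ε) := uIcc_of_le (by linarith)
  have hpos : ∀ s ∈ Icc 0 (t - ε), 0 < t - s := fun s hs => by linarith [hs.2]
  have hkernel : ∀ s ∈ uIcc 0 (t - ε),
      HasDerivAt (fun s => (t - s) ^ (-α)) (α * (t - s) ^ (-α - 1)) s := by
    intro s hs
    refine ((Real.hasDerivAt_rpow_const (p := -α) (Or.inl (hpos s (huIcc ▸ hs)).ne')).comp s
      ((hasDerivAt_id s).const_sub t)).congr_deriv ?_
    ring
  have hkernel' : ContinuousOn (fun s => α * (t - s) ^ (-α - 1)) (uIcc 0 (t - ε)) :=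
    continuousOn_const.mul <| (continuousOn_const.sub continuousOn_id).rpow_const
      fun s hs => Or.inl (hpos s (huIcc ▸ hs)).ne'
  have hparts := intervalIntegral.integral_mul_deriv_eq_deriv_mul hkernel
    (fun s hs => ((hg s (hsub (huIcc ▸ hs))).hasDerivAt).sub_const (g t))
    hkernel'.intervalIntegrable (huIcc ▸ hg'.mono hsub).intervalIntegrable
  have hleft : 0 ≤ (t - 0) ^ (-α) * (g t - g 0) :=
    mul_nonneg (Real.rpow_nonneg (by linarith) _) (sub_nonneg.2 (hmax ⟨le_rfl, by linarith⟩))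
  have hinterior : 0 ≤ ∫ s in (0:ℝ)..(t - ε), -(α * (t - s) ^ (-α - 1) * (g s - g t)) := by
    refine intervalIntegral.integral_nonneg (by linarith) fun s hs => ?_
    rw [← mul_neg, neg_sub]
    exact mul_nonneg (mul_nonneg hα0 (Real.rpow_nonneg (hpos s hs).le _))
      (sub_nonneg.2 (hmax (hsub hs)))
  rw [intervalIntegral.integral_neg] at hinterior
  rw [hparts, sub_sub_cancel]
  linarith

lemma tendsto_rpow_neg_mul_sub_of_differentiableAt (hα1 : α < 1) {g : ℝ → ℝ}
    (hg : DifferentiableAt ℝ g t) :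
    Tendsto (fun ε => ε ^ (-α) * (g (t - ε) - g t)) (𝓝[>] 0) (𝓝 0) := by
  have hlip : (fun ε => g (t - ε) - g t) =O[𝓝 0] fun ε => ε := by
    have h := hg.isBigO_sub.comp_tendsto ((continuous_sub_left t).tendsto' 0 t (sub_zero t))
    simp only [Function.comp_def, sub_sub_cancel_left] at h
    exact h.of_neg_right
  have hpow : Tendsto (fun ε : ℝ => ε ^ (-α) * ε) (𝓝[>] 0) (𝓝 0) := by
    have hcont := (Real.continuousAt_rpow_const 0 (-α + 1) (Or.inr (by linarith))).tendsto
    rw [Real.zero_rpow (by linarith)] at hcont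
    refine (hcont.mono_left nhdsWithin_le_nhds).congr' ?_
    filter_upwards [self_mem_nhdsWithin] with ε hε using Real.rpow_add_one (ne_of_gt hε) _
  exact ((Asymptotics.isBigO_refl (fun ε : ℝ => ε ^ (-α)) _).mul
    (hlip.mono nhdsWithin_le_nhds)).trans_tendsto hpow

lemma tendsto_integral_sub_nhdsGT_zero (ht : 0 < t) {f : ℝ → ℝ}
    (hf : IntervalIntegrable f volume 0 t) :
    Tendsto (fun ε => ∫ s in (0:ℝ)..(t - ε), f s) (𝓝[>] 0) (𝓝 (∫ s in (0:ℝ)..t, f s)) := by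
  have hprimitive := intervalIntegral.continuousOn_primitive_interval' hf left_mem_uIcc
  have hshift : Tendsto (fun ε => t - ε) (𝓝[>] 0) (𝓝[uIcc 0 t] t) := by
    refine tendsto_nhdsWithin_iff.2 ⟨?_, ?_⟩
    · exact ((continuous_sub_left t).tendsto' 0 t (sub_zero t)).mono_left nhdsWithin_le_nhds
    · filter_upwards [Ioc_mem_nhdsGT ht] with ε hε
      rw [uIcc_of_le ht.le]
      exact ⟨by linarith [hε.2], by linarith [hε.1]⟩
  exact (hprimitive t right_mem_uIcc).tendsto.comp hshift

lemma caputo_nonneg_of_isMaxOn (hα0 : 0 ≤ α) (hα1 : α < 1) (ht : 0 < t) {g : ℝ → ℝ}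
    (hg : ∀ s ∈ Icc 0 t, DifferentiableAt ℝ g s) (hg' : ContinuousOn (deriv g) (Icc 0 t))
    (hmax : IsMaxOn g (Icc 0 t) t) :
    0 ≤ caputo α g t := by
  have hintegral : 0 ≤ ∫ s in (0:ℝ)..t, (t - s) ^ (-α) * deriv g s :=
    le_of_tendsto_of_tendsto
      (tendsto_rpow_neg_mul_sub_of_differentiableAt hα1 (hg t ⟨ht.le, le_rfl⟩))
      (tendsto_integral_sub_nhdsGT_zero ht (intervalIntegrable_sub_rpow_neg_mul hα1 ht.le hg'))
      (eventually_of_mem (Ioc_mem_nhdsGT ht)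
        fun ε hε => rpow_neg_mul_sub_le_integral_of_isMaxOn hα0 hg hg' hmax hε)
  rw [caputo_eq_inv_mul_integral]
  exact mul_nonneg (inv_nonneg.2 (Real.Gamma_pos_of_pos (by linarith)).le) hintegral

theorem caputo_comp_le_of_convexOn (hα0 : 0 ≤ α) (hα1 : α < 1) (ht : 0 < t) {φ F : ℝ → ℝ}
    (hφ : ConvexOn ℝ univ φ) (hφ' : ContDiff ℝ 1 φ)
    (hF : ∀ s ∈ Icc 0 t, DifferentiableAt ℝ F s) (hF' : ContinuousOn (deriv F) (Icc 0 t)) :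
    caputo α (φ ∘ F) t ≤ deriv φ (F t) * caputo α F t := by
  set c := deriv φ (F t)
  have hφF : ∀ s ∈ Icc 0 t, DifferentiableAt ℝ (φ ∘ F) s := fun s hs =>
    (hφ'.differentiable one_ne_zero (F s)).comp s (hF s hs)
  have hφF' : ContinuousOn (deriv (φ ∘ F)) (Icc 0 t) :=
    (((hφ'.continuous_deriv le_rfl).comp_continuousOn
      fun s hs => (hF s hs).continuousAt.continuousWithinAt).mul hF').congr
      fun s hs => deriv_comp s (hφ'.differentiable one_ne_zero (F s)) (hF s hs)
  have hcF : ∀ s ∈ Icc 0 t, DifferentiableAt ℝ (fun s => c * F s) s := fun s hs =>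
    (hF s hs).const_mul c
  have hcF' : ContinuousOn (deriv fun s => c * F s) (Icc 0 t) := by
    rw [deriv_const_mul_field']
    exact continuousOn_const.mul hF'
  have hmax : IsMaxOn ((fun s => c * F s) - φ ∘ F) (Icc 0 t) t := fun s _ => by
    have := hφ.apply_add_mul_sub_le_of_hasDerivAt (mem_univ (F t)) (mem_univ (F s))
      (hφ'.differentiable one_ne_zero (F t)).hasDerivAt
    show c * F s - φ (F s) ≤ c * F t - φ (F t)
    linarith
  have hnonneg := caputo_nonneg_of_isMaxOn hα0 hα1 ht (fun s hs => (hcF s hs).sub (hφF s hs))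
    ((hcF'.sub hφF').congr fun s hs => deriv_sub (hcF s hs) (hφF s hs)) hmax
  rw [caputo_sub hα1 ht.le hcF hcF' hφF hφF', caputo_const_mul] at hnonneg
  linarith

end Caputo

theorem caputo_chain_ineq_general (α p T : ℝ) (hα0 : 0 < α) (hα1 : α < 1) (hp : 1 < p)
    (F : ℝ → ℝ) (hdiff : ∀ s ∈ Set.Icc (0:ℝ) T, DifferentiableAt ℝ F s)
    (hcont : ContinuousOn (deriv F) (Set.Icc 0 T)) :
    ∀ t ∈ Set.Ioc (0:ℝ) T,
      caputo α (fun s => |F s| ^ p) t ≤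
        p * (if F t = 0 then 0 else |F t| ^ (p - 2) * F t) * caputo α F t := by
  rintro t ⟨ht, htT⟩
  have hsub : Icc 0 t ⊆ Icc 0 T := Icc_subset_Icc_right htT
  have hcomp := caputo_comp_le_of_convexOn hα0.le hα1 ht (convexOn_abs_rpow hp.le)
    (contDiff_norm_rpow hp) (fun s hs => hdiff s (hsub hs)) (hcont.mono hsub)
  rw [(hasDerivAt_abs_rpow (F t) hp).deriv] at hcomp
  have hsign : (if F t = 0 then 0 else |F t| ^ (p - 2) * F t) = |F t| ^ (p - 2) * F t := by
    split_ifs with h <;> simp [h]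
  rwa [hsign, ← mul_assoc]

theorem caputo_chain_ineq (α p T : ℝ) (hα0 : 0 < α) (hα1 : α < 1) (hp : 1 < p) (hT : 0 < T)
    (F : ℝ → ℝ) (hdiff : ∀ s ∈ Set.Icc (0:ℝ) T, DifferentiableAt ℝ F s)
    (hcont : ContinuousOn (deriv F) (Set.Icc 0 T)) :
    ∀ t ∈ Set.Ioc (0:ℝ) T,
      caputo α (fun s => |F s| ^ p) t ≤
        p * (if F t = 0 then 0 else |F t| ^ (p - 2) * F t) * caputo α F t :=
  caputo_chain_ineq_general α p T hα0 hα1 hp F hdiff hcont
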